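/- arXiv:1904.03599 — 6 statements merged into one kernel-verified Lean document; each statement's English description precedes it below -/
import Mathlib

section
/- Let Γ be a simplicial graph, 𝒢 = (G_u) a family of nontrivial groups indexed by the vertices of Γ, and let u, v be two distinct non-adjacent vertices of Γ. Let N be the normal closure in Γ𝒢 of the union of the vertex subgroups G_w for all vertices w ∉ {u,v}. Then the homomorphism from the free product G_u ∗ G_v to the quotient Γ𝒢/N induced by the inclusions of G_u and G_v into Γ𝒢 followed by the quotient map is an isomorphism. -/
/-- The set of commutation relators defining a graph product. -/
def graphProdRels {V : Type*} (Γ : SimpleGraph V) (G : V → Type*) [∀ w, Group (G w)] :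
    Set (Monoid.CoprodI G) :=
  {x | ∃ (u v : V) (_ : Γ.Adj u v) (g : G u) (h : G v),
    x = Monoid.CoprodI.of g * Monoid.CoprodI.of h *
      (Monoid.CoprodI.of g)⁻¹ * (Monoid.CoprodI.of h)⁻¹}

/-- The graph product of the family of groups `G` over the simplicial graph `Γ`. -/
def GraphProduct {V : Type*} (Γ : SimpleGraph V) (G : V → Type*) [∀ w, Group (G w)] :=
  Monoid.CoprodI G ⧸ Subgroup.normalClosure (graphProdRels Γ G)

instance {V : Type*} (Γ : SimpleGraph V) (G : V → Type*) [∀ w, Group (G w)] :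
    Group (GraphProduct Γ G) :=
  inferInstanceAs (Group (Monoid.CoprodI G ⧸ Subgroup.normalClosure (graphProdRels Γ G)))

/-- The canonical map from a vertex group into the graph product. -/
def GraphProduct.of {V : Type*} (Γ : SimpleGraph V) (G : V → Type*) [∀ w, Group (G w)]
    (u : V) : G u →* GraphProduct Γ G :=
  (QuotientGroup.mk' (Subgroup.normalClosure (graphProdRels Γ G))).comp Monoid.CoprodI.of

/-- The vertex subgroup of the graph product at the vertex `u`. -/
def vertexSubgroup {V : Type*} (Γ : SimpleGraph V) (G : V → Type*) [∀ w, Group (G w)]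
    (u : V) : Subgroup (GraphProduct Γ G) :=
  (GraphProduct.of Γ G u).range

/-- An automorphism of the graph product is conjugating if it sends each vertex subgroup to
a conjugate of a vertex subgroup. -/
def IsConjugating {V : Type*} (Γ : SimpleGraph V) (G : V → Type*) [∀ w, Group (G w)]
    (φ : MulAut (GraphProduct Γ G)) : Prop :=
  ∀ u : V, ∃ (v : V) (g : GraphProduct Γ G),
    Subgroup.map φ.toMonoidHom (vertexSubgroup Γ G u) =
      Subgroup.map (MulAut.conj g).toMonoidHom (vertexSubgroup Γ G v)

/-- An automorphism of the graph product is in `PConjAut` if it sends each vertex subgroup to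
a conjugate of itself. -/
def IsPConjugating {V : Type*} (Γ : SimpleGraph V) (G : V → Type*) [∀ w, Group (G w)]
    (φ : MulAut (GraphProduct Γ G)) : Prop :=
  ∀ u : V, ∃ g : GraphProduct Γ G,
    Subgroup.map φ.toMonoidHom (vertexSubgroup Γ G u) =
      Subgroup.map (MulAut.conj g).toMonoidHom (vertexSubgroup Γ G u)

/-- A vertex is universal if it is adjacent to every other vertex. -/
def IsUniversal {V : Type*} (Γ : SimpleGraph V) (u : V) : Prop :=
  ∀ v : V, v ≠ u → Γ.Adj u v

/-- Some vertex is non-adjacent to at least two other vertices. -/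
def HasVertexWithTwoNonNeighbors {V : Type*} (Γ : SimpleGraph V) : Prop :=
  ∃ u v w : V, v ≠ w ∧ v ≠ u ∧ w ≠ u ∧ ¬Γ.Adj u v ∧ ¬Γ.Adj u w

/-- A group `G` is SQ-universal if every countable group embeds into a quotient of `G`. -/
def SQUniversal (G : Type*) [Group G] : Prop :=
  ∀ (Q : Type) [Group Q] [Countable Q],
    ∃ (N : Subgroup G) (hN : N.Normal),
      haveI := hN
      ∃ f : Q →* G ⧸ N, Function.Injective f

/-- A quasimorphism on a group. -/
def IsQuasimorphism {H : Type*} [Group H] (f : H → ℝ) : Prop :=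
  ∃ C : ℝ, 0 ≤ C ∧ ∀ g h : H, |f (g * h) - f g - f h| ≤ C

/-- A homogeneous map on a group. -/
def IsHomogeneous {H : Type*} [Group H] (f : H → ℝ) : Prop :=
  ∀ (g : H) (k : ℤ), f (g ^ k) = (k : ℝ) * f g

/-- The space of homogeneous quasimorphisms of `H` is infinite-dimensional, expressed as: it is
not contained in the span of any finite set of functions. -/
def HasManyQuasimorphisms (H : Type*) [Group H] : Prop :=
  ¬ ∃ s : Finset (H → ℝ), ∀ f : H → ℝ, IsQuasimorphism f → IsHomogeneous f →
      f ∈ Submodule.span ℝ (s : Set (H → ℝ))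

/-- A group virtually has many quasimorphisms if some finite-index subgroup has an
infinite-dimensional space of homogeneous quasimorphisms. -/
def VirtuallyManyQuasimorphisms (G : Type*) [Group G] : Prop :=
  ∃ H : Subgroup G, H.FiniteIndex ∧ HasManyQuasimorphisms H

/-- A group is boundedly generated if it is the product of finitely many cyclic subgroups. -/
def BoundedlyGenerated (G : Type*) [Group G] : Prop :=
  ∃ l : List G, ∀ g : G, ∃ m : List ℤ, m.length = l.length ∧
    g = (List.zipWith (fun x (k : ℤ) => x ^ k) l m).prod

/-- A group is large if a finite-index subgroup surjects onto a nonabelian free group. -/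
def IsLarge (G : Type*) [Group G] : Prop :=
  ∃ H : Subgroup G, H.FiniteIndex ∧ ∃ f : H →* FreeGroup (Fin 2), Function.Surjective f

/-- A group is virtually free abelian if it has a finite-index subgroup isomorphic to `ℤⁿ`. -/
def VirtuallyFreeAbelian (G : Type*) [Group G] : Prop :=
  ∃ H : Subgroup G, H.FiniteIndex ∧ ∃ n : ℕ, Nonempty (H ≃* Multiplicative (Fin n → ℤ))

/-- The relators of a right-angled Coxeter group. -/
def racgRels {V : Type*} (Γ : SimpleGraph V) : Set (FreeGroup V) :=
  {w | (∃ v : V, w = FreeGroup.of v * FreeGroup.of v) ∨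
    ∃ u v : V, Γ.Adj u v ∧ w = (FreeGroup.of u * FreeGroup.of v) ^ 2}

/-- The right-angled Coxeter group of a simplicial graph. -/
def RACG {V : Type*} (Γ : SimpleGraph V) := PresentedGroup (racgRels Γ)

instance {V : Type*} (Γ : SimpleGraph V) : Group (RACG Γ) :=
  inferInstanceAs (Group (PresentedGroup (racgRels Γ)))

/-!
Sending `G u` and `G v` to the two factors of `G u ∗ G v` and every other vertex group to `1`
respects the commutation relations because `u` and `v` are not adjacent. The resulting map
`Γ𝒢 → G u ∗ G v` kills `N`, and the induced map `Γ𝒢 / N → G u ∗ G v` is inverse to the natural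
one: both composites fix the generators.
-/

namespace GraphProduct

variable {V : Type*} {Γ : SimpleGraph V} {G : V → Type*} [∀ w, Group (G w)]
  {H : Type*} [Group H]

def lift (f : ∀ w, G w →* H)
    (hf : ∀ a b, Γ.Adj a b → ∀ (g : G a) (h : G b), Commute (f a g) (f b h)) :
    GraphProduct Γ G →* H :=
  QuotientGroup.lift _ (Monoid.CoprodI.lift f) <| Subgroup.normalClosure_le_normal <| by
    rintro _ ⟨a, b, hab, g, h, rfl⟩
    simp [(hf a b hab g h).eq]

@[simp]
theorem lift_of (f : ∀ w, G w →* H)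
    (hf : ∀ a b, Γ.Adj a b → ∀ (g : G a) (h : G b), Commute (f a g) (f b h)) {w : V} (g : G w) :
    lift f hf (of Γ G w g) = f w g :=
  Monoid.CoprodI.lift_of f g

theorem hom_ext {φ ψ : GraphProduct Γ G →* H} (h : ∀ w, φ.comp (of Γ G w) = ψ.comp (of Γ G w)) :
    φ = ψ :=
  QuotientGroup.monoidHom_ext _ (Monoid.CoprodI.ext_hom _ _ h)

theorem normalClosure_vertexSubgroup_le_ker {S : Set V} {φ : GraphProduct Γ G →* H}
    (h : ∀ w ∈ S, ∀ g : G w, φ (of Γ G w g) = 1) :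
    Subgroup.normalClosure (⋃ w ∈ S, (vertexSubgroup Γ G w : Set (GraphProduct Γ G))) ≤
      φ.ker := by
  refine Subgroup.normalClosure_le_normal (Set.iUnion₂_subset fun w hw => ?_)
  rintro _ ⟨g, rfl⟩
  exact h w hw g

theorem mk_of_eq_one {S : Set V} {w : V} (hw : w ∈ S) (g : G w) :
    ((of Γ G w g : GraphProduct Γ G) : GraphProduct Γ G ⧸ Subgroup.normalClosure
      (⋃ w ∈ S, (vertexSubgroup Γ G w : Set (GraphProduct Γ G)))) = 1 :=
  (QuotientGroup.eq_one_iff _).2 <| Subgroup.subset_normalClosure <|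
    Set.mem_biUnion hw ⟨g, rfl⟩

section toCoprod

open scoped Classical

variable {u v : V}

noncomputable def toCoprod (u v : V) (hadj : ¬Γ.Adj u v) :
    GraphProduct Γ G →* Monoid.Coprod (G u) (G v) :=
  lift (Function.update (Function.update 1 v Monoid.Coprod.inr) u Monoid.Coprod.inl) <| by
    intro a b hab g h
    by_cases ha : a = u ∨ a = v
    · by_cases hb : b = u ∨ b = v
      · exfalso
        rcases ha with rfl | rfl <;> rcases hb with rfl | rfl
        exacts [hab.ne rfl, hadj hab, hadj hab.symm, hab.ne rfl]
      · obtain ⟨hbu, hbv⟩ := not_or.1 hb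
        simp [Function.update_of_ne hbu, Function.update_of_ne hbv]
    · obtain ⟨hau, hav⟩ := not_or.1 ha
      simp [Function.update_of_ne hau, Function.update_of_ne hav]

theorem toCoprod_of_left (hadj : ¬Γ.Adj u v) (g : G u) :
    toCoprod u v hadj (of Γ G u g) = Monoid.Coprod.inl g := by
  simp [toCoprod]

theorem toCoprod_of_right (huv : u ≠ v) (hadj : ¬Γ.Adj u v) (g : G v) :
    toCoprod u v hadj (of Γ G v g) = Monoid.Coprod.inr g := by
  simp [toCoprod, Function.update_of_ne huv.symm]

theorem toCoprod_of_of_ne (hadj : ¬Γ.Adj u v) {w : V} (hwu : w ≠ u) (hwv : w ≠ v) (g : G w) :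
    toCoprod u v hadj (of Γ G w g) = 1 := by
  simp [toCoprod, Function.update_of_ne hwu, Function.update_of_ne hwv]

end toCoprod

end GraphProduct

theorem coprod_to_quotient_bijective_general {V : Type} (Γ : SimpleGraph V) (G : V → Type)
    [∀ w, Group (G w)] (u v : V) (huv : u ≠ v) (hadj : ¬Γ.Adj u v) :
    Function.Bijective
      (Monoid.Coprod.lift
        ((QuotientGroup.mk' (Subgroup.normalClosure
            (⋃ w ∈ ({u, v} : Set V)ᶜ, (vertexSubgroup Γ G w : Set (GraphProduct Γ G))))).comp
          (GraphProduct.of Γ G u))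
        ((QuotientGroup.mk' (Subgroup.normalClosure
            (⋃ w ∈ ({u, v} : Set V)ᶜ, (vertexSubgroup Γ G w : Set (GraphProduct Γ G))))).comp
          (GraphProduct.of Γ G v))) := by
  set N := Subgroup.normalClosure
    (⋃ w ∈ ({u, v} : Set V)ᶜ, (vertexSubgroup Γ G w : Set (GraphProduct Γ G)))
  let φ := Monoid.Coprod.lift ((QuotientGroup.mk' N).comp (GraphProduct.of Γ G u))
    ((QuotientGroup.mk' N).comp (GraphProduct.of Γ G v))
  let ψ : GraphProduct Γ G ⧸ N →* Monoid.Coprod (G u) (G v) :=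
    QuotientGroup.lift N (GraphProduct.toCoprod u v hadj)
      (GraphProduct.normalClosure_vertexSubgroup_le_ker fun w hw g => by
        simp only [Set.mem_compl_iff, Set.mem_insert_iff, Set.mem_singleton_iff, not_or] at hw
        exact GraphProduct.toCoprod_of_of_ne hadj hw.1 hw.2 g)
  have hψφ : ψ.comp φ = .id _ := by
    refine Monoid.Coprod.hom_ext ?_ ?_ <;> ext g
    · exact GraphProduct.toCoprod_of_left hadj g
    · exact GraphProduct.toCoprod_of_right huv hadj g
  have hφψ : φ.comp ψ = .id _ := by
    refine QuotientGroup.monoidHom_ext _ (GraphProduct.hom_ext fun w => ?_)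
    ext g
    by_cases hwu : w = u
    · subst hwu
      simp [φ, ψ, GraphProduct.toCoprod_of_left]
    by_cases hwv : w = v
    · subst hwv
      simp [φ, ψ, GraphProduct.toCoprod_of_right huv]
    · simp [ψ, GraphProduct.mk_of_eq_one (show w ∈ ({u, v} : Set V)ᶜ by simp [hwu, hwv])]
  exact (MonoidHom.toMulEquiv φ ψ hψφ hφψ).bijective

/-- The natural map `G_u ∗ G_v → Γ𝒢 / N` is an isomorphism, where `N` is the normal closure
of the vertex subgroups other than `G_u` and `G_v`, and `u, v` are non-adjacent. -/
theorem coprod_to_quotient_bijective {V : Type} (Γ : SimpleGraph V) (G : V → Type)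
    [∀ w, Group (G w)] [∀ w, Nontrivial (G w)] (u v : V) (huv : u ≠ v) (hadj : ¬Γ.Adj u v) :
    Function.Bijective
      (Monoid.Coprod.lift
        ((QuotientGroup.mk' (Subgroup.normalClosure
            (⋃ w ∈ ({u, v} : Set V)ᶜ, (vertexSubgroup Γ G w : Set (GraphProduct Γ G))))).comp
          (GraphProduct.of Γ G u))
        ((QuotientGroup.mk' (Subgroup.normalClosure
            (⋃ w ∈ ({u, v} : Set V)ᶜ, (vertexSubgroup Γ G w : Set (GraphProduct Γ G))))).comp
          (GraphProduct.of Γ G v))) :=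
  coprod_to_quotient_bijective_general Γ G u v huv hadj
end

section
/- Let A and B be nontrivial groups and identify A and B with their images in the free product A ∗ B. Then for every g ∈ A ∗ B, the intersection A ∩ gBg⁻¹ is the trivial subgroup. -/
/-- In a free product `A ∗ B` of nontrivial groups, `A ∩ gBg⁻¹` is trivial for every `g`. -/
theorem freeProduct_inl_inf_conj_inr_eq_bot {A B : Type*} [Group A] [Group B]
    [Nontrivial A] [Nontrivial B] (g : Monoid.Coprod A B) :
    (Monoid.Coprod.inl : A →* Monoid.Coprod A B).range ⊓
      Subgroup.map (MulAut.conj g).toMonoidHom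
        (Monoid.Coprod.inr : B →* Monoid.Coprod A B).range = ⊥ := by
  rw [eq_bot_iff]
  rintro x ⟨⟨a, rfl⟩, y, ⟨b, rfl⟩, hy⟩
  have h1 : Monoid.Coprod.fst (Monoid.Coprod.inl a : Monoid.Coprod A B) = a := rfl
  have h2 : Monoid.Coprod.fst ((MulAut.conj g).toMonoidHom (Monoid.Coprod.inr b)) = 1 := by
    simp [MulAut.conj_apply]
  rw [hy] at h2
  rw [h1] at h2
  rw [Subgroup.mem_bot, h2, map_one]
end

section
/- Let A and B be nontrivial groups and identify A and B with their images in the free product A ∗ B. Then for every g ∈ A ∗ B, if the intersection A ∩ gAg⁻¹ is nontrivial, then g ∈ A. In particular, the normalizer of A in A ∗ B equals A (A is a malnormal subgroup of A ∗ B). -/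
/-!
Every element of `CoprodI G` has a unique reduced word. Split `g⁻¹ = of h * w` with `w` reduced and
not starting in `G k`. If `w` is nonempty, then for `b ≠ 1` in `G k` the word `w⁻¹ b w` is already
reduced and has at least three letters, so `g (of a) g⁻¹` cannot be a single letter of `G k`;
hence `w` is empty and `g ∈ G k`. The binary free product `A ∗ B` embeds into such an indexed
coproduct, and malnormality pulls back along injective homomorphisms.
-/

namespace Subgroup

variable {G : Type*} [Group G]

def IsMalnormal (H : Subgroup G) : Prop :=
  ∀ g : G, ∀ h ∈ H, h ≠ 1 → g * h * g⁻¹ ∈ H → g ∈ H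

variable {H : Subgroup G}

theorem IsMalnormal.mem_of_inf_map_conj_ne_bot (hH : H.IsMalnormal) {g : G}
    (hg : H ⊓ H.map (MulAut.conj g).toMonoidHom ≠ ⊥) : g ∈ H := by
  obtain ⟨x, ⟨hxH, h, hh, rfl⟩, hx⟩ := (H ⊓ _).bot_or_exists_ne_one.resolve_left hg
  exact hH g h hh (fun h1 => hx (by simp [h1])) hxH

theorem IsMalnormal.normalizer_eq (hH : H.IsMalnormal) (hbot : H ≠ ⊥) :
    normalizer (H : Set G) = H := by
  refine le_antisymm (fun g hg => ?_) le_normalizer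
  obtain ⟨h, hh, h1⟩ := H.bot_or_exists_ne_one.resolve_left hbot
  exact hH g h hh h1 ((hg h).mp hh)

theorem IsMalnormal.comap {K : Type*} [Group K] {H : Subgroup K} (hH : H.IsMalnormal) {f : G →* K}
    (hf : Function.Injective f) : (H.comap f).IsMalnormal := by
  intro g h hh h1 hconj
  refine hH (f g) (f h) hh ((map_ne_one_iff f hf).mpr h1) ?_
  simpa using hconj

end Subgroup

namespace Monoid.CoprodI

variable {ι : Type*}

theorem exists_eq_of_mul_word_prod [DecidableEq ι] {M : ι → Type*} [∀ i, Monoid (M i)]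
    [∀ i, DecidableEq (M i)] (x : CoprodI M) (k : ι) :
    ∃ (m : M k) (w : Word M), w.fstIdx ≠ some k ∧ x = of m * w.prod := by
  set p := Word.equivPair k (Word.equiv x)
  refine ⟨p.head, p.tail, p.fstIdx_ne, ?_⟩
  rw [← Word.prod_rcons, ← Word.equivPair_symm, Equiv.symm_apply_apply]
  exact (Word.equiv.symm_apply_apply x).symm

variable {G : ι → Type*} [∀ i, Group (G i)]

theorem NeWord.fstIdx_toWord {i j : ι} (v : NeWord G i j) : v.toWord.fstIdx = some i := by
  simp [Word.fstIdx, NeWord.toWord]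

theorem Word.prod_inv_mul_of_mul_prod_ne_of [DecidableEq ι] [∀ i, DecidableEq (G i)] {k : ι}
    {w : Word G} (hw : w ≠ .empty) (hwk : w.fstIdx ≠ some k) {b : G k} (hb : b ≠ 1) (c : G k) :
    w.prod⁻¹ * of b * w.prod ≠ of c := by
  obtain ⟨i, j, v, rfl⟩ := NeWord.of_word w hw
  have hik : i ≠ k := fun h => hwk (h ▸ v.fstIdx_toWord)
  intro heq
  change v.prod⁻¹ * of b * v.prod = of c at heq
  have hc : c ≠ 1 := by
    rintro rfl
    rw [map_one, mul_assoc, inv_mul_eq_one, right_eq_mul, map_eq_one_iff _ (of_injective k)] at heq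
    exact hb heq
  let u := (v.inv.append hik (.singleton b hb)).append hik.symm v
  have hu : u.toWord = (NeWord.singleton c hc).toWord := Word.equiv.symm.injective <| by
    change u.prod = (NeWord.singleton c hc).prod
    simp only [u, NeWord.append_prod, NeWord.inv_prod, NeWord.prod_singleton, ← heq]
  have hlen := congrArg (List.length ∘ Word.toList) hu
  have hv := List.length_pos_iff_ne_nil.mpr v.toList_ne_nil
  simp only [u, NeWord.toWord, NeWord.toList, Function.comp_apply, List.length_append,
    List.length_singleton] at hlen
  omega

theorem isMalnormal_range_of (k : ι) : (of : G k →* CoprodI G).range.IsMalnormal := by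
  classical
  rintro g _ ⟨a, rfl⟩ ha ⟨c, hc⟩
  obtain ⟨h, w, hwk, hg⟩ := exists_eq_of_mul_word_prod g⁻¹ k
  have hg' : g = w.prod⁻¹ * of h⁻¹ := by rw [map_inv, ← mul_inv_rev, ← hg, inv_inv]
  rcases eq_or_ne w .empty with rfl | hw
  · exact ⟨h⁻¹, by simp [hg']⟩
  · refine absurd ?_ (Word.prod_inv_mul_of_mul_prod_ne_of hw hwk (b := h⁻¹ * a * h) ?_ c)
    · rw [hc, hg']
      simp [mul_assoc]
    · intro h1
      exact ha (by rw [conj_eq_one_iff.mp (by rwa [inv_inv] : h⁻¹ * a * h⁻¹⁻¹ = 1), map_one])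

end Monoid.CoprodI

namespace Monoid.Coprod

universe u v

variable {A : Type u} {B : Type v} [Group A] [Group B]

/-- `A ∗ B` as the coproduct of a `Bool`-indexed family; the `ULift`s are needed because `A` and
`B` may live in different universes. -/
abbrev ULiftPair (A : Type u) (B : Type v) : Bool → Type (max u v)
  | true => ULift A
  | false => ULift B

instance : ∀ b, Group (ULiftPair A B b)
  | true => inferInstanceAs (Group (ULift A))
  | false => inferInstanceAs (Group (ULift B))

def toCoprodI : A ∗ B →* CoprodI (ULiftPair A B) :=
  lift ((CoprodI.of (i := true)).comp MulEquiv.ulift.symm.toMonoidHom)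
    ((CoprodI.of (i := false)).comp MulEquiv.ulift.symm.toMonoidHom)

def ofCoprodI : CoprodI (ULiftPair A B) →* A ∗ B :=
  CoprodI.lift fun
    | true => inl.comp MulEquiv.ulift.toMonoidHom
    | false => inr.comp MulEquiv.ulift.toMonoidHom

theorem toCoprodI_inl (a : A) :
    toCoprodI (inl a : A ∗ B) = CoprodI.of (M := ULiftPair A B) (i := true) ⟨a⟩ :=
  lift_apply_inl _ _ a

theorem ofCoprodI_of_true (a : ULiftPair A B true) : ofCoprodI (CoprodI.of a) = inl a.down :=
  CoprodI.lift_of _ a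

theorem ofCoprodI_toCoprodI (x : A ∗ B) : ofCoprodI (toCoprodI x) = x :=
  DFunLike.congr_fun (hom_ext (f := ofCoprodI.comp toCoprodI) (g := .id _) rfl rfl) x

theorem range_inl_eq_comap_toCoprodI :
    (inl : A →* A ∗ B).range = (CoprodI.of (i := true)).range.comap toCoprodI := by
  ext x
  constructor
  · rintro ⟨a, rfl⟩
    exact ⟨⟨a⟩, (toCoprodI_inl a).symm⟩
  · rintro ⟨a, ha⟩
    exact ⟨a.down, by rw [← ofCoprodI_of_true, ha, ofCoprodI_toCoprodI]⟩

theorem isMalnormal_range_inl : (inl : A →* A ∗ B).range.IsMalnormal := by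
  rw [range_inl_eq_comap_toCoprodI]
  exact (CoprodI.isMalnormal_range_of true).comap
    (Function.LeftInverse.injective ofCoprodI_toCoprodI)

end Monoid.Coprod

theorem freeProduct_inl_malnormal_general {A B : Type*} [Group A] [Group B]
    [Nontrivial A] :
    (∀ g : Monoid.Coprod A B,
        (Monoid.Coprod.inl : A →* Monoid.Coprod A B).range ⊓
            Subgroup.map (MulAut.conj g).toMonoidHom
              (Monoid.Coprod.inl : A →* Monoid.Coprod A B).range ≠ ⊥ →
          g ∈ (Monoid.Coprod.inl : A →* Monoid.Coprod A B).range) ∧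
      Subgroup.normalizer ((Monoid.Coprod.inl : A →* Monoid.Coprod A B).range : Set (Monoid.Coprod A B)) =
        (Monoid.Coprod.inl : A →* Monoid.Coprod A B).range := by
  have hA := Monoid.Coprod.isMalnormal_range_inl (A := A) (B := B)
  refine ⟨fun g => hA.mem_of_inf_map_conj_ne_bot, hA.normalizer_eq ?_⟩
  rw [Ne, MonoidHom.range_eq_bot_iff]
  intro h
  obtain ⟨a, ha⟩ := exists_ne (1 : A)
  exact ha (Monoid.Coprod.inl_injective (by rw [h, MonoidHom.one_apply, map_one]))

/-- In a free product `A ∗ B` of nontrivial groups, `A` is malnormal: `A ∩ gAg⁻¹` is nontrivial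
only when `g ∈ A`; in particular the normalizer of `A` is `A`. -/
theorem freeProduct_inl_malnormal {A B : Type*} [Group A] [Group B]
    [Nontrivial A] [Nontrivial B] :
    (∀ g : Monoid.Coprod A B,
        (Monoid.Coprod.inl : A →* Monoid.Coprod A B).range ⊓
            Subgroup.map (MulAut.conj g).toMonoidHom
              (Monoid.Coprod.inl : A →* Monoid.Coprod A B).range ≠ ⊥ →
          g ∈ (Monoid.Coprod.inl : A →* Monoid.Coprod A B).range) ∧
      Subgroup.normalizer ((Monoid.Coprod.inl : A →* Monoid.Coprod A B).range : Set (Monoid.Coprod A B)) =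
        (Monoid.Coprod.inl : A →* Monoid.Coprod A B).range :=
  freeProduct_inl_malnormal_general
end

section
/- Let A and B be groups, let s₁,…,sₙ be a generating set of A and r₁,…,rₙ a generating set of B (n ≥ 1), with every sᵢ and every rᵢ nontrivial. Identify A and B with their images in the free product A ∗ B and set g := s₁r₁·s₂r₂ ⋯ sₙrₙ ∈ A ∗ B. If φ is an automorphism of A ∗ B satisfying φ(A) = A, φ(B) = B, φ(gAg⁻¹) = gAg⁻¹ and φ(gBg⁻¹) = gBg⁻¹ (all as subgroups), then φ is the identity automorphism. (Hence the common stabilizer in Aut(A ∗ B) of the four Bass–Serre tree vertices A, B, gA, gB is trivial.) -/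
/-!
Since `φ` preserves `A` and `B`, the condition `φ(gAg⁻¹) = gAg⁻¹` says that `g⁻¹ φ(g)` normalizes
`A`, and likewise `B`. In a free product of nontrivial groups no nontrivial element `x` normalizes
every factor: if the reduced word of `x` ends in the factor `j`, then for a nontrivial letter `m`
of another factor, `x m x⁻¹` is a reduced word of length at least three. Hence `φ(g) = g`.
As `φ` acts factorwise, `φ(g) = φ(s₁)φ(r₁)⋯φ(sₙ)φ(rₙ)` is again a reduced alternating word, so
uniqueness of reduced words gives `φ(sᵢ) = sᵢ` and `φ(rᵢ) = rᵢ`; these generate `A` and `B`.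
-/

theorem Subgroup.inv_mul_apply_mem_normalizer_of_map_eq {G : Type*} [Group G] {φ : MulAut G}
    {H : Subgroup G} {g : G} (hH : H.map φ.toMonoidHom = H)
    (hgH : (H.map (MulAut.conj g).toMonoidHom).map φ.toMonoidHom =
      H.map (MulAut.conj g).toMonoidHom) :
    g⁻¹ * φ g ∈ normalizer H := by
  rw [mem_normalizer_iff_map_conj_eq]
  calc H.map (MulAut.conj (g⁻¹ * φ g)).toMonoidHom
      = (H.map φ.toMonoidHom).map (MulAut.conj (g⁻¹ * φ g)).toMonoidHom := by rw [hH]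
    _ = ((H.map (MulAut.conj g).toMonoidHom).map φ.toMonoidHom).map
          (MulAut.conj g⁻¹).toMonoidHom := by
        simp only [map_map]
        congr 1
        ext
        simp [mul_assoc]
    _ = H := by
        rw [hgH, map_map]
        convert H.map_id
        ext
        simp [mul_assoc]

namespace Monoid.CoprodI

variable {ι : Type*} {M : ι → Type*}

section

variable (t f : ι)

def altList : List (M t × M f) → List (Σ i, M i)
  | [] => []
  | q :: u => ⟨t, q.1⟩ :: ⟨f, q.2⟩ :: altList u

theorem altList_injective : Function.Injective (altList (M := M) t f)
  | [], [], _ => rfl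
  | q :: u, q' :: v, h => by
    simp only [altList, List.cons.injEq, Sigma.mk.inj_iff, heq_eq_eq, true_and] at h
    rw [Prod.ext h.1 h.2.1, altList_injective h.2.2]

theorem altList_isChain (htf : t ≠ f) :
    ∀ u : List (M t × M f), (altList t f u).IsChain fun p q => p.1 ≠ q.1
  | [] => .nil
  | [_] => .cons_cons htf (.singleton _)
  | _ :: q :: u => .cons_cons htf (.cons_cons htf.symm (altList_isChain htf (q :: u)))

end

variable [∀ i, Monoid (M i)]

theorem Word.prod_injective : Function.Injective (Word.prod : Word M → CoprodI M) := by
  classical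
  exact Word.equiv.symm.injective

variable {t f : ι}

theorem altList_ne_one :
    ∀ {u : List (M t × M f)}, (∀ q ∈ u, q.1 ≠ 1 ∧ q.2 ≠ 1) → ∀ p ∈ altList t f u, p.2 ≠ 1
  | [], _ => by simp [altList]
  | q :: u, hu => by
    simp only [altList, List.forall_mem_cons] at hu ⊢
    exact ⟨hu.1.1, hu.1.2, altList_ne_one hu.2⟩

theorem prod_map_altList (u : List (M t × M f)) :
    ((altList t f u).map fun p => of p.2).prod = (u.map fun q => of q.1 * of q.2).prod := by
  induction u with
  | nil => rfl
  | cons q u ih => simp [altList, ih, mul_assoc]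

def altWord (htf : t ≠ f) (u : List (M t × M f)) (hu : ∀ q ∈ u, q.1 ≠ 1 ∧ q.2 ≠ 1) :
    Word M :=
  ⟨altList t f u, altList_ne_one hu, altList_isChain t f htf u⟩

theorem alternating_prod_injective (htf : t ≠ f) {u v : List (M t × M f)}
    (hu : ∀ q ∈ u, q.1 ≠ 1 ∧ q.2 ≠ 1) (hv : ∀ q ∈ v, q.1 ≠ 1 ∧ q.2 ≠ 1)
    (h : (u.map fun q => of q.1 * of q.2).prod = (v.map fun q => of q.1 * of q.2).prod) :
    u = v :=
  altList_injective t f <| congrArg Word.toList <|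
    Word.prod_injective (a₁ := altWord htf u hu) (a₂ := altWord htf v hv)
      (by simpa only [Word.prod, altWord, prod_map_altList] using h)

theorem NeWord.prod_append_ne_of {i j k l : ι} (w₁ : NeWord M i j) (hne : j ≠ k)
    (w₂ : NeWord M k l) {p : ι} (m : M p) : (NeWord.append w₁ hne w₂).prod ≠ of m := by
  classical
  intro h
  obtain ⟨u, hu, hlen⟩ : ∃ u : Word M, u.prod = of m ∧ u.toList.length ≤ 1 := by
    by_cases hm : m = 1
    · exact ⟨.empty, by simp [hm, Word.prod_empty], by simp [Word.empty]⟩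
    · exact ⟨(NeWord.singleton m hm).toWord, NeWord.prod_singleton m hm, by simp [NeWord.toWord]⟩
  have := congrArg (fun w => w.toList.length) (Word.prod_injective (h.trans hu.symm))
  have h₁ := List.length_pos_of_ne_nil w₁.toList_ne_nil
  have h₂ := List.length_pos_of_ne_nil w₂.toList_ne_nil
  simp only [NeWord.toWord, NeWord.toList, List.length_append] at this
  omega

theorem eq_one_of_forall_mem_normalizer_range_of {G : ι → Type*} [∀ i, Group (G i)]
    (hG : ∀ j, ∃ i ≠ j, Nontrivial (G i)) {x : CoprodI G}
    (hx : ∀ i, x ∈ Subgroup.normalizer (of : G i →* CoprodI G).range) : x = 1 := by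
  classical
  by_contra hx1
  obtain ⟨i, j, w, hw⟩ := NeWord.of_word (Word.equiv x) fun h => hx1 (by
    rw [← Word.equiv.symm_apply_apply x, h]; exact Word.prod_empty)
  replace hw : w.prod = x := by rw [NeWord.prod, hw]; exact Word.equiv.symm_apply_apply x
  obtain ⟨k, hkj, hk⟩ := hG j
  obtain ⟨m, hm⟩ := exists_ne (1 : G k)
  obtain ⟨m', hm'⟩ := (hx k (of m)).mp ⟨m, rfl⟩
  refine NeWord.prod_append_ne_of (.append w hkj.symm (.singleton m hm)) hkj w.inv m' ?_
  simp [hm', hw]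

end Monoid.CoprodI

universe u v

namespace Monoid.Coprod

/-- The summands of `Monoid.CoprodI` must share a universe, hence the `ULift`s. -/
def binaryFamily (M : Type u) (N : Type v) : Bool → Type (max u v) :=
  fun b => cond b (ULift.{v} M) (ULift.{u} N)

instance (M : Type u) (N : Type v) [Group M] [Group N] : ∀ b, Group (binaryFamily M N b)
  | true => inferInstanceAs (Group (ULift M))
  | false => inferInstanceAs (Group (ULift N))

variable {M : Type u} {N : Type v} [Group M] [Group N]

def mulEquivCoprodI : Coprod M N ≃* CoprodI (binaryFamily M N) :=
  MonoidHom.toMulEquiv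
    (lift ((CoprodI.of (i := true)).comp MulEquiv.ulift.symm.toMonoidHom)
      ((CoprodI.of (i := false)).comp MulEquiv.ulift.symm.toMonoidHom))
    (CoprodI.lift fun
      | true => inl.comp MulEquiv.ulift.toMonoidHom
      | false => inr.comp MulEquiv.ulift.toMonoidHom)
    (hom_ext rfl rfl)
    (CoprodI.ext_hom _ _ fun | true => rfl | false => rfl)

@[simp] theorem mulEquivCoprodI_inl (m : M) :
    mulEquivCoprodI (inl m : Coprod M N) = CoprodI.of (i := true) ⟨m⟩ := rfl

@[simp] theorem mulEquivCoprodI_inr (n : N) :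
    mulEquivCoprodI (inr n : Coprod M N) = CoprodI.of (i := false) ⟨n⟩ := rfl

theorem map_range_inl_mulEquivCoprodI :
    (inl : M →* Coprod M N).range.map mulEquivCoprodI.toMonoidHom =
      (CoprodI.of (i := true) : binaryFamily M N true →* _).range := by
  rw [MonoidHom.map_range, show mulEquivCoprodI.toMonoidHom.comp inl =
    (CoprodI.of (i := true)).comp MulEquiv.ulift.symm.toMonoidHom from rfl, MonoidHom.range_comp,
    MonoidHom.range_eq_top_of_surjective _ (MulEquiv.surjective _), ← MonoidHom.range_eq_map]

theorem map_range_inr_mulEquivCoprodI :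
    (inr : N →* Coprod M N).range.map mulEquivCoprodI.toMonoidHom =
      (CoprodI.of (i := false) : binaryFamily M N false →* _).range := by
  rw [MonoidHom.map_range, show mulEquivCoprodI.toMonoidHom.comp inr =
    (CoprodI.of (i := false)).comp MulEquiv.ulift.symm.toMonoidHom from rfl, MonoidHom.range_comp,
    MonoidHom.range_eq_top_of_surjective _ (MulEquiv.surjective _), ← MonoidHom.range_eq_map]

theorem eq_one_of_mem_normalizer_range_inl_inr [Nontrivial M] [Nontrivial N] {x : Coprod M N}
    (hM : x ∈ Subgroup.normalizer (inl : M →* Coprod M N).range)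
    (hN : x ∈ Subgroup.normalizer (inr : N →* Coprod M N).range) : x = 1 := by
  apply mulEquivCoprodI.injective
  rw [map_one]
  refine CoprodI.eq_one_of_forall_mem_normalizer_range_of
    (fun | true => ⟨false, by decide, inferInstanceAs (Nontrivial (ULift N))⟩
         | false => ⟨true, by decide, inferInstanceAs (Nontrivial (ULift M))⟩)
    fun | true => ?_ | false => ?_
  · rw [← map_range_inl_mulEquivCoprodI, ← Subgroup.map_equiv_normalizer_eq]
    exact Subgroup.mem_map_of_mem _ hM
  · rw [← map_range_inr_mulEquivCoprodI, ← Subgroup.map_equiv_normalizer_eq]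
    exact Subgroup.mem_map_of_mem _ hN

theorem alternating_prod_injective {u v : List (M × N)}
    (hu : ∀ q ∈ u, q.1 ≠ 1 ∧ q.2 ≠ 1) (hv : ∀ q ∈ v, q.1 ≠ 1 ∧ q.2 ≠ 1)
    (h : (u.map fun q => inl q.1 * inr q.2).prod = (v.map fun q => inl q.1 * inr q.2).prod) :
    u = v := by
  let e : M × N → binaryFamily M N true × binaryFamily M N false := fun q => (⟨q.1⟩, ⟨q.2⟩)
  have he : e.Injective := fun q q' h =>
    Prod.ext (congrArg (ULift.down ∘ Prod.fst) h) (congrArg (ULift.down ∘ Prod.snd) h)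
  have map_e_ne_one (w : List (M × N)) (hw : ∀ q ∈ w, q.1 ≠ 1 ∧ q.2 ≠ 1) :
      ∀ q ∈ w.map e, q.1 ≠ 1 ∧ q.2 ≠ 1 := by
    simp only [List.forall_mem_map]
    exact fun q hq => ⟨fun h => (hw q hq).1 (congrArg ULift.down h),
      fun h => (hw q hq).2 (congrArg ULift.down h)⟩
  refine List.map_injective_iff.mpr he <| CoprodI.alternating_prod_injective (by decide)
    (map_e_ne_one u hu) (map_e_ne_one v hv) ?_
  have := congrArg mulEquivCoprodI h
  simp only [map_list_prod, List.map_map] at this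
  simpa [e, List.map_map, Function.comp_def] using this

theorem hom_ext_of_closure_eq_top {P : Type*} [Monoid P] {f f' : Coprod M N →* P} {S : Set M}
    {T : Set N} (hS : Subgroup.closure S = ⊤) (hT : Subgroup.closure T = ⊤)
    (hfS : S.EqOn (f.comp inl) (f'.comp inl)) (hfT : T.EqOn (f.comp inr) (f'.comp inr)) :
    f = f' :=
  hom_ext (MonoidHom.eq_of_eqOn_dense hS hfS) (MonoidHom.eq_of_eqOn_dense hT hfT)

end Monoid.Coprod

open Monoid.Coprod

/-- An automorphism of `A ∗ B` stabilizing the four subgroups `A`, `B`, `gAg⁻¹`, `gBg⁻¹`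
setwise, where `g = s₁r₁⋯sₙrₙ` is an alternating product of nontrivial generators, is the
identity. -/
theorem aut_stabilizing_four_vertices_is_id {A B : Type*} [Group A] [Group B]
    (n : ℕ) (hn : 1 ≤ n) (s : Fin n → A) (r : Fin n → B)
    (hs1 : ∀ i, s i ≠ 1) (hr1 : ∀ i, r i ≠ 1)
    (hsgen : Subgroup.closure (Set.range s) = (⊤ : Subgroup A))
    (hrgen : Subgroup.closure (Set.range r) = (⊤ : Subgroup B))
    (g : Monoid.Coprod A B)
    (hg : g = (List.ofFn fun i => Monoid.Coprod.inl (s i) * Monoid.Coprod.inr (r i)).prod)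
    (φ : MulAut (Monoid.Coprod A B))
    (hA : Subgroup.map φ.toMonoidHom (Monoid.Coprod.inl : A →* Monoid.Coprod A B).range =
      (Monoid.Coprod.inl : A →* Monoid.Coprod A B).range)
    (hB : Subgroup.map φ.toMonoidHom (Monoid.Coprod.inr : B →* Monoid.Coprod A B).range =
      (Monoid.Coprod.inr : B →* Monoid.Coprod A B).range)
    (hgA : Subgroup.map φ.toMonoidHom
        (Subgroup.map (MulAut.conj g).toMonoidHom
          (Monoid.Coprod.inl : A →* Monoid.Coprod A B).range) =
      Subgroup.map (MulAut.conj g).toMonoidHom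
        (Monoid.Coprod.inl : A →* Monoid.Coprod A B).range)
    (hgB : Subgroup.map φ.toMonoidHom
        (Subgroup.map (MulAut.conj g).toMonoidHom
          (Monoid.Coprod.inr : B →* Monoid.Coprod A B).range) =
      Subgroup.map (MulAut.conj g).toMonoidHom
        (Monoid.Coprod.inr : B →* Monoid.Coprod A B).range) :
    φ = MulEquiv.refl (Monoid.Coprod A B) := by
  have : Nontrivial A := nontrivial_of_ne _ _ (hs1 ⟨0, hn⟩)
  have : Nontrivial B := nontrivial_of_ne _ _ (hr1 ⟨0, hn⟩)
  have hφg : φ g = g := (inv_mul_eq_one.mp (eq_one_of_mem_normalizer_range_inl_inr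
    (Subgroup.inv_mul_apply_mem_normalizer_of_map_eq hA hgA)
    (Subgroup.inv_mul_apply_mem_normalizer_of_map_eq hB hgB))).symm
  have hφA (a : A) : φ (inl a) ∈ (inl : A →* A ∗ B).range :=
    hA ▸ Subgroup.mem_map_of_mem φ.toMonoidHom (MonoidHom.mem_range.mpr ⟨a, rfl⟩)
  have hφB (b : B) : φ (inr b) ∈ (inr : B →* A ∗ B).range :=
    hB ▸ Subgroup.mem_map_of_mem φ.toMonoidHom (MonoidHom.mem_range.mpr ⟨b, rfl⟩)
  choose α hα using hφA
  choose β hβ using hφB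
  have hα1 : ∀ k, α (s k) ≠ 1 := fun k h =>
    hs1 k (inl_injective (φ.injective (by rw [← hα, h, map_one, map_one])))
  have hβ1 : ∀ k, β (r k) ≠ 1 := fun k h =>
    hr1 k (inr_injective (φ.injective (by rw [← hβ, h, map_one, map_one])))
  have hfix := List.ofFn_injective <| alternating_prod_injective
    (u := List.ofFn fun k => (α (s k), β (r k))) (v := List.ofFn fun k => (s k, r k))
    (by simpa [List.mem_ofFn] using fun k => ⟨hα1 k, hβ1 k⟩)
    (by simpa [List.mem_ofFn] using fun k => ⟨hs1 k, hr1 k⟩)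
    (by simpa [hg, map_list_prod, List.map_ofFn, Function.comp_def, hα, hβ] using hφg)
  refine MulEquiv.toMonoidHom_injective (hom_ext_of_closure_eq_top hsgen hrgen ?_ ?_)
  · rintro _ ⟨k, rfl⟩
    exact (hα _).symm.trans (congrArg (inl ∘ Prod.fst) (congrFun hfix k))
  · rintro _ ⟨k, rfl⟩
    exact (hβ _).symm.trans (congrArg (inr ∘ Prod.snd) (congrFun hfix k))
end

section
/- Let I be a finite index type and (G_i)_{i ∈ I} a family of groups, and let P = ∏_{i ∈ I} G_i be their direct product, with each G_i identified with its canonical factor subgroup of P. Then the subgroup of Aut(P) consisting of those automorphisms φ such that for every i ∈ I there exists g ∈ P with φ(x) = g x g⁻¹ for all x in the factor G_i, is isomorphic to the direct product ∏_{i ∈ I} G_i/Z(G_i). -/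
/-!
An automorphism of `P = ∏ Gᵢ` that agrees with an inner automorphism on each factor is itself
inner: conjugation by the element whose `i`-th coordinate is the `i`-th coordinate of the `i`-th
witness agrees with it on every factor, and the factors generate the finite product. Hence the
subgroup is the image of `MulAut.conj : P →* MulAut P`, isomorphic to `P ⧸ Z(P)`, and
`Z(P) = ∏ Z(Gᵢ)`.
-/

open Subgroup QuotientGroup

theorem MulAut.ker_conj (G : Type*) [Group G] : (MulAut.conj : G →* MulAut G).ker = center G := by
  ext g
  simp [MulEquiv.ext_iff, mem_center_iff, eq_mul_inv_iff_mul_eq, eq_comm]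

section Pi

variable {I : Type*} {G : I → Type*} [∀ i, Group (G i)]

theorem MonoidHom.ker_piMap {H : I → Type*} [∀ i, Group (H i)] (f : ∀ i, G i →* H i) :
    (MonoidHom.piMap f).ker = Subgroup.pi Set.univ fun i => (f i).ker := by
  ext x
  simp [funext_iff, Subgroup.mem_pi]

instance Subgroup.pi_normal (N : ∀ i, Subgroup (G i)) [∀ i, (N i).Normal] :
    (pi Set.univ N).Normal := by
  have h := MonoidHom.ker_piMap fun i => mk' (N i)
  simp only [ker_mk'] at h
  exact h ▸ MonoidHom.normal_ker _

noncomputable def QuotientGroup.piQuotientEquiv (N : ∀ i, Subgroup (G i)) [∀ i, (N i).Normal] :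
    (∀ i, G i) ⧸ pi Set.univ N ≃* ∀ i, G i ⧸ N i :=
  (quotientMulEquivOfEq (by simp [MonoidHom.ker_piMap])).trans
    (quotientKerEquivOfSurjective (MonoidHom.piMap fun i => mk' (N i))
      (Function.Surjective.piMap fun i => mk'_surjective (N i)))

theorem Pi.mul_mulSingle_mul_inv [DecidableEq I] (g : ∀ j, G j) (i : I) (x : G i) :
    g * mulSingle i x * g⁻¹ = mulSingle i (g i * x * (g i)⁻¹) := by
  ext j
  by_cases h : j = i
  · subst h; simp
  · simp [h]

theorem MulAut.mem_range_conj_pi_iff [Finite I] [DecidableEq I] (φ : MulAut (∀ i, G i)) :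
    φ ∈ (MulAut.conj : (∀ i, G i) →* _).range ↔
      ∀ i, ∃ g : ∀ j, G j, ∀ x ∈ (MonoidHom.mulSingle G i).range, φ x = g * x * g⁻¹ := by
  constructor
  · rintro ⟨g, rfl⟩ i
    exact ⟨g, fun x _ => rfl⟩
  · intro h
    choose g hg using h
    refine ⟨fun i => g i i, MulEquiv.toMonoidHom_injective (MonoidHom.pi_ext fun i x => ?_)⟩
    show MulAut.conj _ (Pi.mulSingle i x) = φ (Pi.mulSingle i x)
    rw [hg i (Pi.mulSingle i x) ⟨x, rfl⟩, MulAut.conj_apply, Pi.mul_mulSingle_mul_inv,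
      Pi.mul_mulSingle_mul_inv]

end Pi

/-- The subgroup of automorphisms of a finite direct product acting on each factor by
conjugation is isomorphic to the product of the inner automorphism groups of the factors. -/
theorem conjAut_of_directProduct {I : Type} [Fintype I] [DecidableEq I]
    (G : I → Type) [∀ i, Group (G i)]
    (C : Subgroup (MulAut (∀ i, G i)))
    (hC : ∀ φ : MulAut (∀ i, G i), φ ∈ C ↔
      ∀ i : I, ∃ g : ∀ j, G j, ∀ x ∈ (MonoidHom.mulSingle G i).range, φ x = g * x * g⁻¹) :
    Nonempty (C ≃* ∀ i, G i ⧸ Subgroup.center (G i)) := by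
  obtain rfl : C = (MulAut.conj : (∀ i, G i) →* _).range :=
    Subgroup.ext fun φ => (hC φ).trans (MulAut.mem_range_conj_pi_iff φ).symm
  exact ⟨(quotientKerEquivRange MulAut.conj).symm.trans <|
    (quotientMulEquivOfEq (by rw [MulAut.ker_conj, Subgroup.center_pi])).trans <|
      piQuotientEquiv _⟩
end

section
/- Let Γ be a finite simplicial graph. The right-angled Coxeter group C_Γ is large if and only if some vertex of Γ is non-adjacent to at least two other vertices of Γ (equivalently, if and only if Γ does not decompose as the join of a complete graph with copies of the disjoint union of two single vertices). -/
/-!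
If `u` is non-adjacent to `v ≠ w`, let `σ` invert both generators `x, y` of `F₂` and `τ` swap them.
Sending `u, v, w` to the involutions `(x, σ), (1, σ), (1, τ)` of `F₂ ⋊ ⟨σ, τ⟩` and every other
vertex to `1` defines a homomorphism whose image contains `x = uv` and `y = w(uv)w`; as `⟨σ, τ⟩`
is finite, the preimage of `F₂` has finite index and surjects onto `F₂`.

Conversely, if every vertex has at most one non-neighbour, the products `ab` of distinct
non-adjacent vertices commute pairwise, and conjugating one of them by a generator fixes it or
inverts it. They therefore generate a normal abelian subgroup, and the quotient is generated by
finitely many commuting involutions, hence finite. A virtually abelian group is not large, since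
no subgroup of finite index of `F₂` is abelian: powers `xᵐ` and `yⁿ` never commute, as their
images in `SL(2, ℤ)` show.
-/

namespace Subgroup

variable {G : Type*} [Group G]

theorem finite_closure_of_commute {s : Set G} [Finite s] (hcomm : ∀ x ∈ s, ∀ y ∈ s, Commute x y)
    (hfin : ∀ x ∈ s, IsOfFinOrder x) : Finite (closure s) := by
  have := Fintype.ofFinite s
  have : ∀ x : s, Finite (zpowers (x : G)) := fun x => (hfin x x.2).finite_zpowers
  have hcomm' : Pairwise fun x y : s => ∀ a b : G, a ∈ zpowers (x : G) → b ∈ zpowers (y : G) →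
      Commute a b := fun x y _ a b ha hb => by
    obtain ⟨m, rfl⟩ := mem_zpowers_iff.mp ha
    obtain ⟨n, rfl⟩ := mem_zpowers_iff.mp hb
    exact (hcomm x x.2 y y.2).zpow_zpow m n
  have hrange : (noncommPiCoprod hcomm').range = closure s := by
    rw [noncommPiCoprod_range]
    conv_rhs => rw [← Set.iUnion_of_singleton_coe s, closure_iUnion]
    simp only [zpowers_eq_closure]
  rw [← hrange]
  exact Set.finite_range _

theorem normal_closure_of_conj_mem {s t : Set G} (ht : closure t = ⊤)
    (hinv : ∀ z ∈ t, z * z = 1) (hs : ∀ z ∈ t, ∀ x ∈ s, z * x * z ∈ s) :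
    (closure s).Normal := by
  rw [← normalizer_eq_top_iff, eq_top_iff, ← ht, closure_le]
  intro z hz
  apply normalizer_le_normalizer_closure
  have hz' : z⁻¹ = z := inv_eq_of_mul_eq_one_right (hinv z hz)
  have hmaps : Set.MapsTo (MulAut.conj z) s s := fun x hx => by
    simpa [MulAut.conj_apply, hz'] using hs z hz x hx
  rw [mem_normalizer_iff_conj_image_eq]
  refine (Set.image_subset_iff.2 hmaps).antisymm fun x hx => ⟨MulAut.conj z x, hmaps hx, ?_⟩
  simp [MulAut.conj_apply, hz', mul_assoc, ← mul_assoc z z, hinv z hz]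

end Subgroup

namespace FreeGroup

open ModularGroup Matrix.SpecialLinearGroup MatrixGroups in
theorem not_commute_pow_of_pos {m n : ℕ} (hm : 0 < m) (hn : 0 < n) :
    ¬Commute (of (0 : Fin 2) ^ m) (of (1 : Fin 2) ^ n) := by
  intro hc
  let θ : FreeGroup (Fin 2) →* SL(2, ℤ) := lift ![T, MulAut.conj S T]
  have hx : θ (of 0 ^ m) = T ^ (m : ℤ) := by simp [θ]
  have hy : θ (of 1 ^ n) = MulAut.conj S (T ^ (n : ℤ)) := by
    rw [_root_.map_pow, zpow_natCast, _root_.map_pow]; simp [θ]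
  have h := congrArg θ hc.eq
  rw [_root_.map_mul, _root_.map_mul, hx, hy] at h
  have h00 := congrArg (fun g : SL(2, ℤ) => (g : Matrix (Fin 2) (Fin 2) ℤ) 0 0) h
  simp only [MulAut.conj_apply, coe_mul, coe_T_zpow, S_inv, coe_neg, coe_S] at h00
  -- the two `(0, 0)` entries are `1 - mn` and `1`
  simp [Matrix.mul_apply, Fin.sum_univ_two] at h00
  omega

theorem not_isMulCommutative_of_finiteIndex (M : Subgroup (FreeGroup (Fin 2))) [M.FiniteIndex] :
    ¬IsMulCommutative M := by
  intro hM
  obtain ⟨m, hm, -, hxm⟩ := M.exists_pow_mem_of_index_ne_zero M.index_ne_zero_of_finite (of 0)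
  obtain ⟨n, hn, -, hyn⟩ := M.exists_pow_mem_of_index_ne_zero M.index_ne_zero_of_finite (of 1)
  exact not_commute_pow_of_pos hm hn (setLike_mul_comm hxm hyn)

variable {α : Type*}

theorem mulAut_ext {e₁ e₂ : MulAut (FreeGroup α)} (h : ∀ a, e₁ (of a) = e₂ (of a)) : e₁ = e₂ :=
  MulEquiv.toMonoidHom_injective (ext_hom _ _ h)

def invertAut : MulAut (FreeGroup α) :=
  have h : (lift fun a => (of a)⁻¹).comp (lift fun a => (of a)⁻¹) = MonoidHom.id _ := by
    ext; simp
  MonoidHom.toMulEquiv _ _ h h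

@[simp] theorem invertAut_of (a : α) : invertAut (of a) = (of a)⁻¹ := by
  simp [invertAut]

theorem invertAut_mul_self : (invertAut : MulAut (FreeGroup α)) * invertAut = 1 :=
  mulAut_ext fun a => by simp

theorem commute_invertAut_freeGroupCongr (e : α ≃ α) : Commute invertAut (freeGroupCongr e) :=
  mulAut_ext fun a => by simp [MulAut.mul_apply]

theorem freeGroupCongr_swap_mul_self [DecidableEq α] (a b : α) :
    freeGroupCongr (Equiv.swap a b) * freeGroupCongr (Equiv.swap a b) = 1 :=
  mulAut_ext fun c => by simp [MulAut.mul_apply]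

end FreeGroup

theorem isLarge_of_le_range {G T : Type*} [Group G] [Group T] (f : G →* T) (N : Subgroup T)
    [N.FiniteIndex] (e : N ≃* FreeGroup (Fin 2)) (hN : N ≤ f.range) : IsLarge G := by
  have : (N.comap f).FiniteIndex :=
    ⟨by rw [Subgroup.index_comap]; exact Subgroup.isFiniteRelIndex_of_finiteIndex.relIndex_ne_zero⟩
  refine ⟨N.comap f, inferInstance, e.toMonoidHom.comp (f.subgroupComap N), ?_⟩
  refine e.surjective.comp fun n => ?_
  obtain ⟨g, hg⟩ := hN n.2
  exact ⟨⟨g, by simp [hg]⟩, Subtype.ext hg⟩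

theorem isLarge_of_inl_mem_range {G K : Type*} [Group G] [Group K] [Finite K]
    {φ : K →* MulAut (FreeGroup (Fin 2))} (f : G →* FreeGroup (Fin 2) ⋊[φ] K)
    (hf : ∀ i, SemidirectProduct.inl (FreeGroup.of i) ∈ f.range) : IsLarge G := by
  have : (SemidirectProduct.inl : FreeGroup (Fin 2) →* _ ⋊[φ] K).range.FiniteIndex := by
    rw [SemidirectProduct.range_inl_eq_ker_rightHom]
    exact Subgroup.finiteIndex_ker _
  refine isLarge_of_le_range f _ (MonoidHom.ofInjective SemidirectProduct.inl_injective).symm ?_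
  rw [MonoidHom.range_eq_map, ← FreeGroup.closure_range_of, MonoidHom.map_closure,
    Subgroup.closure_le]
  rintro _ ⟨_, ⟨i, rfl⟩, rfl⟩
  exact hf i

theorem not_isLarge_of_isMulCommutative {G : Type*} [Group G] (A : Subgroup G) [A.FiniteIndex]
    [IsMulCommutative A] : ¬IsLarge G := by
  rintro ⟨H, hH, f, hf⟩
  have : ((A.subgroupOf H).map f).FiniteIndex := ⟨ne_zero_of_dvd_ne_zero
    (A.subgroupOf H).index_ne_zero_of_finite (Subgroup.index_map_dvd _ hf)⟩
  exact FreeGroup.not_isMulCommutative_of_finiteIndex ((A.subgroupOf H).map f) inferInstance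

open FreeGroup in
def kleinAut : Subgroup (MulAut (FreeGroup (Fin 2))) :=
  Subgroup.closure {invertAut, freeGroupCongr (Equiv.swap 0 1)}

namespace kleinAut

open FreeGroup

theorem commute_of_mem {x y : MulAut (FreeGroup (Fin 2))}
    (hx : x ∈ ({invertAut, freeGroupCongr (Equiv.swap 0 1)} : Set _))
    (hy : y ∈ ({invertAut, freeGroupCongr (Equiv.swap 0 1)} : Set _)) : Commute x y := by
  have := commute_invertAut_freeGroupCongr (Equiv.swap (0 : Fin 2) 1)
  rcases hx with rfl | rfl <;> rcases hy with rfl | rfl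
  exacts [.refl _, this, this.symm, .refl _]

instance : Finite kleinAut := by
  refine Subgroup.finite_closure_of_commute (fun _ hx _ hy => commute_of_mem hx hy) ?_
  rintro x (rfl | rfl)
  · exact isOfFinOrder_iff_pow_eq_one.2 ⟨2, two_pos, by rw [pow_two, invertAut_mul_self]⟩
  · exact isOfFinOrder_iff_pow_eq_one.2 ⟨2, two_pos, by rw [pow_two, freeGroupCongr_swap_mul_self]⟩

def invert : kleinAut := ⟨invertAut, Subgroup.subset_closure (by simp)⟩

def swap : kleinAut := ⟨freeGroupCongr (Equiv.swap 0 1), Subgroup.subset_closure (by simp)⟩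

@[simp] theorem coe_invert : (invert : MulAut (FreeGroup (Fin 2))) = invertAut := rfl

@[simp] theorem coe_swap : (swap : MulAut (FreeGroup (Fin 2))) = freeGroupCongr (Equiv.swap 0 1) :=
  rfl

theorem invert_mul_self : invert * invert = 1 := Subtype.ext invertAut_mul_self

theorem swap_mul_self : swap * swap = 1 := Subtype.ext (freeGroupCongr_swap_mul_self 0 1)

theorem commute_invert_swap : Commute invert swap :=
  Subtype.ext (commute_invertAut_freeGroupCongr _)

end kleinAut

namespace RACG

variable {V : Type*} {Γ : SimpleGraph V}

variable (Γ) in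
def of (v : V) : RACG Γ := PresentedGroup.of v

theorem closure_range_of : Subgroup.closure (Set.range (of Γ)) = ⊤ :=
  PresentedGroup.closure_range_of _

theorem of_mul_self (v : V) : of Γ v * of Γ v = 1 :=
  (QuotientGroup.eq_one_iff _).2 (Subgroup.subset_normalClosure (Or.inl ⟨v, rfl⟩))

theorem of_inv (v : V) : (of Γ v)⁻¹ = of Γ v :=
  inv_eq_of_mul_eq_one_right (of_mul_self v)

theorem commute_of_adj {u v : V} (h : Γ.Adj u v) : Commute (of Γ u) (of Γ v) := by
  have h1 : (of Γ u * of Γ v) ^ 2 = 1 :=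
    (QuotientGroup.eq_one_iff _).2 (Subgroup.subset_normalClosure (Or.inr ⟨u, v, h, rfl⟩))
  rw [pow_two, mul_eq_one_iff_eq_inv, mul_inv_rev, of_inv, of_inv] at h1
  exact h1

section Lift

variable {T : Type*} [Group T]

def lift (f : V → T) (hsq : ∀ v, f v * f v = 1)
    (hcomm : ∀ u v, Γ.Adj u v → Commute (f u) (f v)) : RACG Γ →* T :=
  PresentedGroup.toGroup (rels := racgRels Γ) (f := f) <| by
    rintro r (⟨v, rfl⟩ | ⟨u, v, huv, rfl⟩)
    · simpa using hsq v
    · simp only [map_mul, FreeGroup.lift_apply_of, pow_two]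
      rw [mul_eq_one_iff_eq_inv, mul_inv_rev, inv_eq_of_mul_eq_one_right (hsq u),
        inv_eq_of_mul_eq_one_right (hsq v)]
      exact hcomm u v huv

@[simp] theorem lift_of {f : V → T} {hsq : ∀ v, f v * f v = 1}
    {hcomm : ∀ u v, Γ.Adj u v → Commute (f u) (f v)} (v : V) :
    lift f hsq hcomm (of Γ v) = f v :=
  PresentedGroup.toGroup.of _

theorem exists_hom_of_not_adj {u v w : V} (hvw : v ≠ w) (hvu : v ≠ u) (hwu : w ≠ u)
    (huv : ¬Γ.Adj u v) (huw : ¬Γ.Adj u w) {a b c : T} (ha : a * a = 1) (hb : b * b = 1)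
    (hc : c * c = 1) (hbc : Commute b c) :
    ∃ f : RACG Γ →* T, f (of Γ u) = a ∧ f (of Γ v) = b ∧ f (of Γ w) = c := by
  classical
  let g : V → T := fun z => if z = u then a else if z = v then b else if z = w then c else 1
  have hsq : ∀ z, g z * g z = 1 := fun z => by
    simp only [g]; split_ifs <;> simp [*]
  have hcomm : ∀ z₁ z₂, Γ.Adj z₁ z₂ → Commute (g z₁) (g z₂) := fun z₁ z₂ h => by
    simp only [g]
    split_ifs <;> subst_vars <;> first
      | exact .refl _ | exact .one_left _ | exact .one_right _ | exact hbc | exact hbc.symm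
      | exact absurd h ‹_› | exact absurd h.symm ‹_›
  exact ⟨lift g hsq hcomm, by simp [g], by simp [g, hvu], by simp [g, hwu, hvw.symm]⟩

end Lift

variable (Γ) in
def nonAdjProducts : Set (RACG Γ) :=
  {x | ∃ a b, a ≠ b ∧ ¬Γ.Adj a b ∧ x = of Γ a * of Γ b}

section AtMostOneNonNeighbor

variable (hΓ : ¬HasVertexWithTwoNonNeighbors Γ)
include hΓ

theorem eq_of_not_adj {a b c : V} (hab : a ≠ b) (hac : a ≠ c) (hnab : ¬Γ.Adj a b)
    (hnac : ¬Γ.Adj a c) : b = c := by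
  by_contra hbc
  exact hΓ ⟨a, b, c, hbc, hab.symm, hac.symm, hnab, hnac⟩

theorem commute_of_ne_of_ne {a b z : V} (hab : a ≠ b) (hnab : ¬Γ.Adj a b) (hza : z ≠ a)
    (hzb : z ≠ b) : Commute (of Γ z) (of Γ a * of Γ b) := by
  have hza' : Γ.Adj a z := by
    by_contra h; exact hzb (eq_of_not_adj hΓ hab hza.symm hnab h).symm
  have hzb' : Γ.Adj b z := by
    by_contra h
    exact hza (eq_of_not_adj hΓ hab.symm hzb.symm (fun h' => hnab h'.symm) h).symm
  exact (commute_of_adj hza'.symm).mul_right (commute_of_adj hzb'.symm)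

theorem commute_of_mem_nonAdjProducts {x y : RACG Γ} (hx : x ∈ nonAdjProducts Γ)
    (hy : y ∈ nonAdjProducts Γ) : Commute x y := by
  obtain ⟨a, b, hab, hnab, rfl⟩ := hx
  obtain ⟨c, d, hcd, hncd, rfl⟩ := hy
  have hrev : of Γ b * of Γ a = (of Γ a * of Γ b)⁻¹ := by rw [mul_inv_rev, of_inv, of_inv]
  have hnba : ¬Γ.Adj b a := fun h => hnab h.symm
  -- `{c, d}` is either `{a, b}` or disjoint from it.
  by_cases hc : c = a ∨ c = b
  · rcases hc with rfl | rfl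
    · obtain rfl := eq_of_not_adj hΓ hcd hab hncd hnab
      exact .refl _
    · obtain rfl := eq_of_not_adj hΓ hcd hab.symm hncd hnba
      rw [hrev]
      exact (Commute.refl _).inv_right
  have hd : ¬(d = a ∨ d = b) := by
    rintro (rfl | rfl)
    · exact hc (.inr (eq_of_not_adj hΓ hcd.symm hab (fun h => hncd h.symm) hnab))
    · exact hc (.inl (eq_of_not_adj hΓ hcd.symm hab.symm (fun h => hncd h.symm) hnba))
  push Not at hc hd
  exact ((commute_of_ne_of_ne hΓ hab hnab hc.1 hc.2).mul_left
    (commute_of_ne_of_ne hΓ hab hnab hd.1 hd.2)).symm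

theorem of_mul_mul_of_mem_nonAdjProducts {z : V} {x : RACG Γ} (hx : x ∈ nonAdjProducts Γ) :
    of Γ z * x * of Γ z ∈ nonAdjProducts Γ := by
  obtain ⟨a, b, hab, hnab, rfl⟩ := hx
  by_cases hza : z = a
  · subst hza
    exact ⟨b, z, hab.symm, fun h => hnab h.symm, by rw [← mul_assoc, of_mul_self, one_mul]⟩
  by_cases hzb : z = b
  · subst hzb
    exact ⟨z, a, hab.symm, fun h => hnab h.symm, by rw [mul_assoc, mul_assoc, of_mul_self, mul_one]⟩
  refine ⟨a, b, hab, hnab, ?_⟩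
  rw [(commute_of_ne_of_ne hΓ hab hnab hza hzb).eq, mul_assoc, of_mul_self, mul_one]

theorem isMulCommutative_closure_nonAdjProducts :
    IsMulCommutative (Subgroup.closure (nonAdjProducts Γ)) :=
  Subgroup.isMulCommutative_closure fun _ hx _ hy => (commute_of_mem_nonAdjProducts hΓ hx hy).eq

theorem normal_closure_nonAdjProducts : (Subgroup.closure (nonAdjProducts Γ)).Normal :=
  Subgroup.normal_closure_of_conj_mem closure_range_of (by rintro _ ⟨z, rfl⟩; exact of_mul_self z)
    (by rintro _ ⟨z, rfl⟩ x hx; exact of_mul_mul_of_mem_nonAdjProducts hΓ hx)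

theorem finiteIndex_closure_nonAdjProducts [Finite V] :
    (Subgroup.closure (nonAdjProducts Γ)).FiniteIndex := by
  have := normal_closure_nonAdjProducts hΓ
  let q := QuotientGroup.mk' (Subgroup.closure (nonAdjProducts Γ))
  have hq : ∀ {a b}, a ≠ b → ¬Γ.Adj a b → q (of Γ a) * q (of Γ b) = 1 := fun hab hnab => by
    rw [← map_mul, QuotientGroup.mk'_apply, QuotientGroup.eq_one_iff]
    exact Subgroup.subset_closure ⟨_, _, hab, hnab, rfl⟩
  have hcomm : ∀ x ∈ Set.range (q ∘ of Γ), ∀ y ∈ Set.range (q ∘ of Γ), Commute x y := by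
    rintro _ ⟨a, rfl⟩ _ ⟨b, rfl⟩
    by_cases hab : a = b
    · rw [hab]
    by_cases hadj : Γ.Adj a b
    · exact (commute_of_adj hadj).map q
    · exact (hq hab hadj).trans (hq (Ne.symm hab) fun h => hadj h.symm).symm
  have hfin : ∀ x ∈ Set.range (q ∘ of Γ), IsOfFinOrder x := by
    rintro _ ⟨a, rfl⟩
    refine isOfFinOrder_iff_pow_eq_one.2 ⟨2, two_pos, ?_⟩
    rw [pow_two, Function.comp_apply, ← map_mul, of_mul_self, map_one]
  have htop : Subgroup.closure (Set.range (q ∘ of Γ)) = ⊤ := by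
    rw [Set.range_comp, ← MonoidHom.map_closure, closure_range_of, ← MonoidHom.range_eq_map,
      MonoidHom.range_eq_top]
    exact QuotientGroup.mk'_surjective _
  have := Subgroup.finite_closure_of_commute hcomm hfin
  rw [htop] at this
  have : Finite (RACG Γ ⧸ Subgroup.closure (nonAdjProducts Γ)) :=
    Finite.of_equiv _ Subgroup.topEquiv.toEquiv
  exact Subgroup.finiteIndex_of_finite_quotient

end AtMostOneNonNeighbor

open SemidirectProduct kleinAut in
theorem isLarge_of_hasVertexWithTwoNonNeighbors (hΓ : HasVertexWithTwoNonNeighbors Γ) :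
    IsLarge (RACG Γ) := by
  obtain ⟨u, v, w, hvw, hvu, hwu, huv, huw⟩ := hΓ
  let a : FreeGroup (Fin 2) ⋊[kleinAut.subtype] kleinAut := ⟨.of 0, invert⟩
  let b : FreeGroup (Fin 2) ⋊[kleinAut.subtype] kleinAut := ⟨1, invert⟩
  let c : FreeGroup (Fin 2) ⋊[kleinAut.subtype] kleinAut := ⟨1, swap⟩
  have ha : a * a = 1 := by ext : 1 <;> simp [a, invert_mul_self]
  have hb : b * b = 1 := by ext : 1 <;> simp [b, invert_mul_self]
  have hc : c * c = 1 := by ext : 1 <;> simp [c, swap_mul_self]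
  have hbc : Commute b c := by ext : 1 <;> simp [b, c, commute_invert_swap.eq]
  have hab : a * b = inl (.of 0) := by ext : 1 <;> simp [a, b, invert_mul_self]
  have hcabc : c * (a * b) * c = inl (.of 1) := by
    rw [hab]; ext : 1 <;> simp [c, swap_mul_self]
  obtain ⟨f, hu, hv, hw⟩ := exists_hom_of_not_adj hvw hvu hwu huv huw ha hb hc hbc
  refine isLarge_of_inl_mem_range f (Fin.forall_fin_two.2 ⟨?_, ?_⟩)
  · exact ⟨of Γ u * of Γ v, by rw [map_mul, hu, hv, hab]⟩
  · exact ⟨of Γ w * (of Γ u * of Γ v) * of Γ w, by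
      rw [map_mul, map_mul, map_mul, hu, hv, hw, hcabc]⟩

end RACG

/-- A right-angled Coxeter group is large iff some vertex of the graph is non-adjacent to at
least two other vertices. -/
theorem racg_isLarge_iff {V : Type} [Fintype V] (Γ : SimpleGraph V) :
    IsLarge (RACG Γ) ↔ HasVertexWithTwoNonNeighbors Γ := by
  refine ⟨fun hL => ?_, RACG.isLarge_of_hasVertexWithTwoNonNeighbors⟩
  by_contra hΓ
  have := RACG.isMulCommutative_closure_nonAdjProducts hΓ
  have := RACG.finiteIndex_closure_nonAdjProducts hΓ
  exact not_isLarge_of_isMulCommutative (Subgroup.closure (RACG.nonAdjProducts Γ)) hL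
end
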